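/- Let f : I ⊆ (0,∞) → (0,∞) be differentiable on I°, let a, b ∈ I° with a < b, f' integrable on [a,b], and suppose |f'|^q is s-geometrically convex on [a,b] for some q > 1 and s ∈ (0,1]. If |f'(b)| ≤ 1 ≤ |f'(a)|, then |f(√(ab)) − (1/(ln b − ln a)) ∫_a^b f(x)/x dx| ≤ (1/4) ln(b/a) · ((q−1)/(2q−1))^{1−1/q} · [ a|f'(a)| g₂(θ₃)^{1/q} + b|f'(b)|^s |f'(a)|^{1−s} g₂(θ₄)^{1/q} ]. -/

import Mathlib

open Real MeasureTheory Set

/-- `g` is `s`-geometrically convex on `J`. -/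
def SGeometricallyConvexOn (s : ℝ) (J : Set ℝ) (g : ℝ → ℝ) : Prop :=
  ∀ x ∈ J, ∀ y ∈ J, ∀ t ∈ Set.Icc (0:ℝ) 1,
    g (x ^ t * y ^ (1 - t)) ≤ g x ^ t ^ s * g y ^ (1 - t) ^ s

noncomputable def g₁ (u : ℝ) : ℝ :=
  if u = 1 then 1/2 else (u * Real.log u - u + 1) / (Real.log u) ^ 2

noncomputable def g₂ (u : ℝ) : ℝ :=
  if u = 1 then 1 else (u - 1) / Real.log u

/-! Substituting `x = exp u` turns the left-hand side into `F m - (1/L) ∫_A^B F` for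
`F = f ∘ exp` on `[A, B] = [log a, log b]`, with `L = B - A` and midpoint `m`; one integration by
parts of `v ↦ F (A + v) + F (B - v)` rewrites it as `(1/L) ∫_0^{L/2} v (φ (A + v) - φ (B - v)) dv`,
where `φ u = exp u * f' (exp u)`. Geometric convexity of `|f'|` together with `s t ≤ t ^ s`,
`(1 - t) ^ s ≤ 1 - s t` and `|f' b| ≤ 1 ≤ |f' a|` bounds `|φ|` on the whole of `[A, B]` by the
single exponential `a |f' a| exp (k (u - A))`, where `exp (k L) = b |f' b| ^ s / (a |f' a| ^ s)`.
Hölder's inequality against this majorant on each half gives the two `g₂` terms.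
The case `f' b = 0` does not occur: convexity would force `f' = 0` on `(a, b)`, hence `f' a = 0`. -/
lemma mul_le_rpow_of_le_one {s x : ℝ} (hs : s ≤ 1) (hx0 : 0 ≤ x) (hx1 : x ≤ 1) :
    s * x ≤ x ^ s := by
  rcases hx0.eq_or_lt with rfl | hx0
  · rw [mul_zero]
    positivity
  calc s * x ≤ x := by nlinarith
    _ = x ^ (1 : ℝ) := (rpow_one x).symm
    _ ≤ x ^ s := rpow_le_rpow_of_exponent_ge hx0 hx1 hs

lemma rpow_mul_rpow_le_of_le_one_le {α β s t : ℝ} (hβ0 : 0 ≤ β) (hβ1 : β ≤ 1)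
    (hα : 1 ≤ α) (hs0 : 0 ≤ s) (hs1 : s ≤ 1) (ht0 : 0 ≤ t) (ht1 : t ≤ 1) :
    β ^ t ^ s * α ^ (1 - t) ^ s ≤ β ^ (s * t) * α ^ (1 - s * t) := by
  have hbern : (1 - t) ^ s ≤ 1 - s * t := by
    simpa [sub_eq_add_neg] using
      rpow_one_add_le_one_add_mul_self (by linarith : -1 ≤ -t) hs0 hs1
  gcongr ?_ * ?_
  · exact rpow_le_rpow_of_exponent_ge' hβ0 hβ1 (by positivity)
      (mul_le_rpow_of_le_one hs1 ht0 ht1)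
  · exact rpow_le_rpow_of_exponent_le hα hbern

lemma rpow_mul_rpow_eq_exp {x y : ℝ} (hx : 0 < x) (hy : 0 < y) (t : ℝ) :
    x ^ t * y ^ (1 - t) = exp (log y + t * (log x - log y)) := by
  rw [rpow_def_of_pos hx, rpow_def_of_pos hy, ← exp_add]
  ring_nf

namespace SGeometricallyConvexOn

variable {s : ℝ} {J : Set ℝ} {g : ℝ → ℝ}

lemma of_rpow {q : ℝ} (hq : 0 < q) (hg : ∀ x, 0 ≤ g x)
    (h : SGeometricallyConvexOn s J (fun x => g x ^ q)) : SGeometricallyConvexOn s J g := by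
  intro x hx y hy t ht
  have key := h x hx y hy t ht
  simp only at key
  rw [← rpow_mul (hg x), ← rpow_mul (hg y), mul_comm q, mul_comm q, rpow_mul (hg x),
    rpow_mul (hg y), ← mul_rpow (rpow_nonneg (hg x) _) (rpow_nonneg (hg y) _)] at key
  exact (rpow_le_rpow_iff (hg _) (mul_nonneg (rpow_nonneg (hg x) _) (rpow_nonneg (hg y) _))
    hq).1 key

lemma nonpos_of_apply_right_eq_zero {a b x : ℝ} (ha : 0 < a)
    (hg : SGeometricallyConvexOn s (Icc a b) g) (hgb : g b = 0) (hx : x ∈ Ioo a b) :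
    g x ≤ 0 := by
  have hab : a < b := hx.1.trans hx.2
  have hlog : log a < log x ∧ log x < log b :=
    ⟨log_lt_log ha hx.1, log_lt_log (ha.trans hx.1) hx.2⟩
  set t := (log x - log b) / (log a - log b)
  have ht0 : 0 < t := div_pos_of_neg_of_neg (by linarith) (by linarith)
  have ht1 : t < 1 := (div_lt_one_of_neg (by linarith)).2 (by linarith)
  have hxt : a ^ t * b ^ (1 - t) = x := by
    rw [rpow_mul_rpow_eq_exp ha (ha.trans hab), ← exp_log (ha.trans hx.1)]
    congr 1
    rw [div_mul_cancel₀ _ (by linarith : log a - log b ≠ 0)]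
    ring
  have key := hg a ⟨le_rfl, hab.le⟩ b ⟨hab.le, le_rfl⟩ t ⟨ht0.le, ht1.le⟩
  rwa [hxt, hgb, zero_rpow (rpow_pos_of_pos (sub_pos.2 ht1) s).ne', mul_zero] at key

end SGeometricallyConvexOn

lemma eq_zero_of_hasDerivAt_of_forall_Ioo_eq_zero {f f' : ℝ → ℝ} {a b : ℝ} (hab : a < b)
    (hf : ∀ x ∈ Ico a b, HasDerivAt f (f' x) x) (h0 : ∀ x ∈ Ioo a b, f' x = 0) :
    f' a = 0 := by
  have hconst : ∀ x ∈ Ioo a b, f x = f a := by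
    intro x hx
    obtain ⟨c, hc, hslope⟩ := exists_hasDerivAt_eq_slope f f' hx.1
      (fun y hy => (hf y ⟨hy.1, hy.2.trans_lt hx.2⟩).continuousAt.continuousWithinAt)
      (fun y hy => hf y ⟨hy.1.le, hy.2.trans hx.2⟩)
    rw [h0 c ⟨hc.1, hc.2.trans hx.2⟩, eq_comm, div_eq_zero_iff, sub_eq_zero] at hslope
    exact hslope.resolve_right (sub_pos.2 hx.1).ne'
  have hzero : HasDerivWithinAt f 0 (Ioi a) a := by
    refine (hasDerivWithinAt_const a (Ioi a) (f a)).congr_of_eventuallyEq ?_ rfl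
    filter_upwards [Ioo_mem_nhdsGT hab] with x hx using hconst x hx
  exact (uniqueDiffWithinAt_Ioi a).eq_deriv _ (hf a ⟨le_rfl, hab⟩).hasDerivWithinAt hzero

lemma g₂_nonneg {u : ℝ} (hu : 0 < u) : 0 ≤ g₂ u := by
  unfold g₂
  split_ifs with h
  · norm_num
  rcases lt_or_gt_of_ne h with h1 | h1
  · exact div_nonneg_of_nonpos (by linarith) (log_nonpos hu.le h1.le)
  · exact div_nonneg (by linarith) (log_nonneg h1.le)

lemma integral_exp_mul_eq_mul_g₂ (r h : ℝ) :
    ∫ v in 0..h, exp (r * v) = h * g₂ (exp (r * h)) := by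
  rcases eq_or_ne (r * h) 0 with hrh | hrh
  · rcases mul_eq_zero.1 hrh with rfl | rfl <;> simp [g₂]
  have hr : r ≠ 0 := left_ne_zero_of_mul hrh
  have hh : h ≠ 0 := right_ne_zero_of_mul hrh
  rw [intervalIntegral.integral_comp_mul_left (fun v => exp v) hr, integral_exp, mul_zero,
    exp_zero, g₂, if_neg (by rwa [exp_eq_one_iff]), log_exp, smul_eq_mul]
  field_simp

lemma integral_mul_abs_le_of_abs_rpow_le {α : Type*} [MeasurableSpace α] {μ : Measure α}
    {p q : ℝ} (hpq : p.HolderConjugate q) {w ψ g : α → ℝ} (hw0 : 0 ≤ᵐ[μ] w)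
    (hw : MemLp w (ENNReal.ofReal p) μ) (hψ : AEStronglyMeasurable ψ μ) (hg : Integrable g μ)
    (hψg : ∀ᵐ x ∂μ, |ψ x| ^ q ≤ g x) :
    ∫ x, w x * |ψ x| ∂μ ≤
      (∫ x, w x ^ p ∂μ) ^ (1 / p) * (∫ x, g x ∂μ) ^ (1 / q) := by
  have hq0 : 0 < q := hpq.symm.pos
  have hψabs : AEStronglyMeasurable (fun x => |ψ x|) μ := by
    simpa only [Real.norm_eq_abs] using hψ.norm
  have hψq_int : Integrable (fun x => |ψ x| ^ q) μ := by
    refine hg.mono' (hψabs.aemeasurable.pow_const _).aestronglyMeasurable ?_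
    filter_upwards [hψg] with x hx
    rwa [Real.norm_eq_abs, abs_of_nonneg (by positivity)]
  have hψq : MemLp (fun x => |ψ x|) (ENNReal.ofReal q) μ := by
    rw [← integrable_norm_rpow_iff hψabs (by simpa using hq0) ENNReal.ofReal_ne_top,
      ENNReal.toReal_ofReal hq0.le]
    simpa only [Real.norm_eq_abs, abs_abs] using hψq_int
  refine (integral_mul_le_Lp_mul_Lq_of_nonneg hpq hw0 (ae_of_all _ fun x => abs_nonneg _) hw
    hψq).trans (mul_le_mul_of_nonneg_left ?_ ?_)
  · exact rpow_le_rpow (integral_nonneg fun x => by positivity)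
      (integral_mono_ae hψq_int hg hψg) (by positivity)
  · exact rpow_nonneg (integral_nonneg_of_ae (hw0.mono fun x hx => rpow_nonneg hx p)) _

lemma integral_mul_abs_le_of_abs_le_mul_exp {ψ : ℝ → ℝ} {h q K k : ℝ} (hh : 0 < h)
    (hq : 1 < q) (hψ : IntervalIntegrable ψ volume 0 h)
    (hψK : ∀ v ∈ Icc 0 h, |ψ v| ≤ K * exp (k * v)) :
    ∫ v in 0..h, v * |ψ v| ≤
      h ^ 2 * ((q - 1) / (2 * q - 1)) ^ (1 - 1 / q) * (K * g₂ (exp (q * k * h)) ^ (1 / q)) := by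
  set p := q.conjExponent
  have hpq : p.HolderConjugate q := (HolderConjugate.conjExponent hq).symm
  have hp : 1 < p := hpq.lt
  have hK : 0 ≤ K := by
    simpa using (abs_nonneg _).trans (hψK 0 ⟨le_rfl, hh.le⟩)
  have hG : 0 ≤ g₂ (exp (q * k * h)) := g₂_nonneg (exp_pos _)
  have : IsFiniteMeasure (volume.restrict (Ioc 0 h)) := ⟨by simp⟩
  have hw : MemLp (fun v : ℝ => v) (ENNReal.ofReal p) (volume.restrict (Ioc 0 h)) :=
    MemLp.of_bound continuous_id.aestronglyMeasurable h
      (ae_restrict_of_forall_mem measurableSet_Ioc fun v hv => by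
        rw [Real.norm_eq_abs, abs_of_pos hv.1]; exact hv.2)
  have hψg : ∀ᵐ v ∂volume.restrict (Ioc 0 h), |ψ v| ^ q ≤ K ^ q * exp (q * k * v) :=
    ae_restrict_of_forall_mem measurableSet_Ioc fun v hv => by
      calc |ψ v| ^ q ≤ (K * exp (k * v)) ^ q :=
            rpow_le_rpow (abs_nonneg _) (hψK v (Ioc_subset_Icc_self hv)) (by linarith)
        _ = K ^ q * exp (q * k * v) := by
            rw [mul_rpow hK (exp_pos _).le, ← exp_mul]; ring_nf
  have holder := integral_mul_abs_le_of_abs_rpow_le (μ := volume.restrict (Ioc 0 h)) hpq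
    (ae_restrict_of_forall_mem measurableSet_Ioc fun v hv => hv.1.le) hw
    hψ.1.aestronglyMeasurable
    (by fun_prop : Continuous fun v => K ^ q * exp (q * k * v)).integrableOn_Ioc hψg
  rw [← intervalIntegral.integral_of_le hh.le, ← intervalIntegral.integral_of_le hh.le,
    ← intervalIntegral.integral_of_le hh.le, integral_rpow (Or.inl (by linarith)),
    intervalIntegral.integral_const_mul, integral_exp_mul_eq_mul_g₂,
    zero_rpow (by linarith)] at holder
  refine holder.trans_eq ?_
  have h1p : 1 / p = 1 - 1 / q := by
    rw [one_div, one_div, ← hpq.inv_add_inv_eq_one]; ring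
  have hp1 : 1 / (p + 1) = (q - 1) / (2 * q - 1) := by
    have : q - 1 ≠ 0 := by linarith
    simp only [p, conjExponent]
    field_simp
    ring
  have hexp : (p + 1) * (1 / p) + 1 / q = 2 := by
    rw [add_mul, one_mul, mul_one_div_cancel (by linarith), h1p]; ring
  rw [sub_zero, ← hp1, ← h1p, div_eq_mul_one_div (h ^ (p + 1)),
    mul_rpow (by positivity) (by positivity), ← rpow_mul hh.le,
    mul_rpow (rpow_nonneg hK q) (by positivity), ← rpow_mul hK,
    mul_one_div_cancel (by linarith), rpow_one, mul_rpow hh.le hG, ← rpow_two, ← hexp,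
    rpow_add hh]
  ring

lemma IntervalIntegrable.comp_add_left_half {φ : ℝ → ℝ} {A B : ℝ} (hAB : A ≤ B)
    (hφ : IntervalIntegrable φ volume A B) :
    IntervalIntegrable (fun v => φ (A + v)) volume 0 ((B - A) / 2) :=
  (hφ.comp_add_left A).mono_set <| uIcc_subset_uIcc
    (by rw [mem_uIcc]; exact .inl ⟨by linarith, by linarith⟩)
    (by rw [mem_uIcc]; exact .inl ⟨by linarith, by linarith⟩)

lemma IntervalIntegrable.comp_sub_left_half {φ : ℝ → ℝ} {A B : ℝ} (hAB : A ≤ B)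
    (hφ : IntervalIntegrable φ volume A B) :
    IntervalIntegrable (fun v => φ (B - v)) volume 0 ((B - A) / 2) :=
  (hφ.comp_sub_left B).mono_set <| uIcc_subset_uIcc
    (by rw [mem_uIcc]; exact .inr ⟨by linarith, by linarith⟩)
    (by rw [mem_uIcc]; exact .inr ⟨by linarith, by linarith⟩)

lemma mul_apply_midpoint_sub_integral_eq {F φ : ℝ → ℝ} {A B : ℝ} (hAB : A ≤ B)
    (hF : ∀ u ∈ Icc A B, HasDerivAt F (φ u) u) (hφ : IntervalIntegrable φ volume A B) :
    (B - A) * F ((A + B) / 2) - ∫ u in A..B, F u =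
      ∫ v in 0..(B - A) / 2, v * (φ (A + v) - φ (B - v)) := by
  set h := (B - A) / 2 with hh
  have hmem : ∀ v ∈ uIcc 0 h, A + v ∈ Icc A B ∧ B - v ∈ Icc A B := by
    intro v hv
    rw [uIcc_of_le (by positivity)] at hv
    exact ⟨⟨by linarith [hv.1], by linarith [hv.2]⟩,
      ⟨by linarith [hv.2], by linarith [hv.1]⟩⟩
  have hF₁ : ∀ v ∈ uIcc 0 h, HasDerivAt (fun v => F (A + v)) (φ (A + v)) v :=
    fun v hv => (hF _ (hmem v hv).1).comp_const_add A v
  have hF₂ : ∀ v ∈ uIcc 0 h, HasDerivAt (fun v => F (B - v)) (-φ (B - v)) v :=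
    fun v hv => (hF _ (hmem v hv).2).comp_const_sub B v
  have hFc : ContinuousOn F (Icc A B) := fun u hu => (hF u hu).continuousAt.continuousWithinAt
  have hm : (A + B) / 2 ∈ Icc A B := ⟨by linarith, by linarith⟩
  have hFint : ∀ c ∈ Icc A B, ∀ d ∈ Icc A B, IntervalIntegrable F volume c d :=
    fun c hc d hd => (hFc.mono (uIcc_subset_Icc hc hd)).intervalIntegrable
  have hibp := intervalIntegral.integral_mul_deriv_eq_deriv_mul (u := fun v => v)
    (fun v _ => hasDerivAt_id v) (fun v hv => (hF₁ v hv).add (hF₂ v hv))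
    intervalIntegrable_const
    (by simpa only [← sub_eq_add_neg] using
      (hφ.comp_add_left_half hAB).sub (hφ.comp_sub_left_half hAB))
  simp only [← sub_eq_add_neg, one_mul, Pi.add_apply] at hibp
  rw [hibp, intervalIntegral.integral_add
      (ContinuousOn.intervalIntegrable fun v hv => (hF₁ v hv).continuousAt.continuousWithinAt)
      (ContinuousOn.intervalIntegrable fun v hv => (hF₂ v hv).continuousAt.continuousWithinAt),
    intervalIntegral.integral_comp_add_left F A, intervalIntegral.integral_comp_sub_left F B,
    ← intervalIntegral.integral_add_adjacent_intervals (hFint A (left_mem_Icc.2 hAB) _ hm)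
      (hFint _ hm B (right_mem_Icc.2 hAB)),
    show A + h = (A + B) / 2 by rw [hh]; ring, show B - h = (A + B) / 2 by rw [hh]; ring, hh]
  ring_nf

lemma intervalIntegrable_exp_mul_comp_exp {g : ℝ → ℝ} {a b : ℝ} (ha : 0 < a) (hb : 0 < b)
    (hg : IntervalIntegrable g volume a b) :
    IntervalIntegrable (fun u => exp u * g (exp u)) volume (log a) (log b) := by
  have := (intervalIntegral.integrable_comp_mul_deriv_iff_of_deriv_nonneg (a := log a)
    (b := log b) (g := g) continuous_exp.continuousOn (fun u _ => hasDerivAt_exp u)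
    (fun u _ => (exp_pos u).le)).2
    (by rwa [exp_log ha, exp_log hb])
  simpa only [Function.comp_apply, mul_comm] using this

lemma integral_comp_exp {g : ℝ → ℝ} {a b : ℝ} (ha : 0 < a) (hb : 0 < b) :
    ∫ u in log a..log b, exp u * g (exp u) = ∫ x in a..b, g x := by
  have := intervalIntegral.integral_comp_mul_deriv_of_deriv_nonneg (a := log a) (b := log b)
    (g := g) continuous_exp.continuousOn (fun u _ => hasDerivAt_exp u) (fun u _ => (exp_pos u).le)
  rw [exp_log ha, exp_log hb] at this
  simpa only [Function.comp_apply, mul_comm] using this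

lemma log_sub_log_mul_apply_sqrt_sub_integral_div_eq {f f' : ℝ → ℝ} {a b : ℝ} (ha : 0 < a)
    (hab : a ≤ b) (hf : ∀ x ∈ Icc a b, HasDerivAt f (f' x) x)
    (hf' : IntervalIntegrable f' volume a b) :
    (log b - log a) * f √(a * b) - ∫ x in a..b, f x / x =
      ∫ v in 0..(log b - log a) / 2, v * (exp (log a + v) * f' (exp (log a + v)) -
        exp (log b - v) * f' (exp (log b - v))) := by
  have hb : 0 < b := ha.trans_le hab
  have hexp : ∀ u ∈ Icc (log a) (log b), exp u ∈ Icc a b := fun u hu =>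
    ⟨by simpa [exp_log ha] using exp_le_exp.2 hu.1,
      by simpa [exp_log hb] using exp_le_exp.2 hu.2⟩
  have hsubst : ∫ x in a..b, f x / x = ∫ u in log a..log b, f (exp u) := by
    rw [← integral_comp_exp ha hb]
    exact intervalIntegral.integral_congr fun u _ => mul_div_cancel₀ _ (exp_pos u).ne'
  have hsqrt : √(a * b) = exp ((log a + log b) / 2) := by
    rw [← exp_log (sqrt_pos.2 (mul_pos ha hb)), log_sqrt (mul_pos ha hb).le,
      log_mul ha.ne' hb.ne']
  rw [hsubst, hsqrt]
  exact mul_apply_midpoint_sub_integral_eq (F := fun u => f (exp u)) (log_le_log ha hab)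
    (fun u hu => by
      simpa only [mul_comm, Function.comp_def] using (hf _ (hexp u hu)).comp u (hasDerivAt_exp u))
    (intervalIntegrable_exp_mul_comp_exp ha hb hf')

lemma abs_exp_mul_apply_exp_le {f' : ℝ → ℝ} {a b s u : ℝ} (ha : 0 < a) (hab : a < b)
    (hs0 : 0 ≤ s) (hs1 : s ≤ 1) (hconv : SGeometricallyConvexOn s (Icc a b) (fun x => |f' x|))
    (hfb0 : 0 < |f' b|) (hfb : |f' b| ≤ 1) (hfa : 1 ≤ |f' a|) (hu : u ∈ Icc (log a) (log b)) :
    |exp u * f' (exp u)| ≤ a * |f' a| *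
      exp (log (b * |f' b| ^ s / (a * |f' a| ^ s)) / (log b - log a) * (u - log a)) := by
  have hb : 0 < b := ha.trans hab
  have hfa0 : 0 < |f' a| := one_pos.trans_le hfa
  have hL : 0 < log b - log a := sub_pos.2 (log_lt_log ha hab)
  set t := (u - log a) / (log b - log a)
  have ht0 : 0 ≤ t := div_nonneg (by linarith [hu.1]) hL.le
  have ht1 : t ≤ 1 := (div_le_one hL).2 (by linarith [hu.2])
  have htL : t * (log b - log a) = u - log a := div_mul_cancel₀ _ hL.ne'
  have hxt : b ^ t * a ^ (1 - t) = exp u := by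
    rw [rpow_mul_rpow_eq_exp hb ha, htL, add_sub_cancel]
  have hconv_u := hconv b ⟨hab.le, le_rfl⟩ a ⟨le_rfl, hab.le⟩ t ⟨ht0, ht1⟩
  simp only [hxt] at hconv_u
  have hlog : log (b * |f' b| ^ s / (a * |f' a| ^ s)) =
      log b - log a + s * log |f' b| - s * log |f' a| := by
    rw [log_div (by positivity) (by positivity), log_mul hb.ne' (by positivity),
      log_mul ha.ne' (by positivity), log_rpow hfb0, log_rpow hfa0]
    ring
  calc |exp u * f' (exp u)| = exp u * |f' (exp u)| := by rw [abs_mul, abs_of_pos (exp_pos u)]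
    _ ≤ exp u * (|f' b| ^ (s * t) * |f' a| ^ (1 - s * t)) :=
        mul_le_mul_of_nonneg_left (hconv_u.trans
          (rpow_mul_rpow_le_of_le_one_le hfb0.le hfb hfa hs0 hs1 ht0 ht1)) (exp_pos u).le
    _ = exp (log a + log |f' a| + t * (log b - log a + s * log |f' b| - s * log |f' a|)) := by
        rw [rpow_def_of_pos hfb0, rpow_def_of_pos hfa0, ← exp_add, ← exp_add]
        congr 1
        linear_combination (-1 : ℝ) * htL
    _ = _ := by
        rw [exp_add, exp_add, exp_log ha, exp_log hfa0, hlog, div_mul_comm]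

lemma abs_integral_mul_sub_le {ψ₁ ψ₂ : ℝ → ℝ} {h : ℝ} (hh : 0 ≤ h)
    (h₁ : IntervalIntegrable ψ₁ volume 0 h) (h₂ : IntervalIntegrable ψ₂ volume 0 h) :
    |∫ v in 0..h, v * (ψ₁ v - ψ₂ v)| ≤
      (∫ v in 0..h, v * |ψ₁ v|) + ∫ v in 0..h, v * |ψ₂ v| := by
  have hw : ∀ ψ : ℝ → ℝ, IntervalIntegrable ψ volume 0 h →
      IntervalIntegrable (fun v => v * |ψ v|) volume 0 h :=
    fun ψ hψ => hψ.abs.continuousOn_mul continuousOn_id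
  rw [← intervalIntegral.integral_add (hw _ h₁) (hw _ h₂)]
  refine (intervalIntegral.abs_integral_le_integral_abs hh).trans
    (intervalIntegral.integral_mono_on hh ((h₁.sub h₂).continuousOn_mul continuousOn_id).abs
      ((hw _ h₁).add (hw _ h₂)) fun v hv => ?_)
  rw [abs_mul, abs_of_nonneg hv.1, ← mul_add]
  exact mul_le_mul_of_nonneg_left (abs_sub _ _) hv.1

theorem abs_apply_sqrt_sub_integral_div_le {f f' : ℝ → ℝ} {a b q s : ℝ} (ha : 0 < a)
    (hab : a < b) (hf : ∀ x ∈ Icc a b, HasDerivAt f (f' x) x)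
    (hf' : IntervalIntegrable f' volume a b)
    (hq : 1 < q) (hs0 : 0 ≤ s) (hs1 : s ≤ 1)
    (hconv : SGeometricallyConvexOn s (Icc a b) (fun x => |f' x|))
    (hfb0 : 0 < |f' b|) (hfb : |f' b| ≤ 1) (hfa : 1 ≤ |f' a|) :
    |f √(a * b) - 1 / (log b - log a) * ∫ x in a..b, f x / x| ≤
      1 / 4 * log (b / a) * ((q - 1) / (2 * q - 1)) ^ (1 - 1 / q) *
        (a * |f' a| * (g₂ ((b * |f' b| ^ s / (a * |f' a| ^ s)) ^ (q / 2))) ^ (1 / q)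
         + b * |f' b| ^ s * |f' a| ^ (1 - s) *
           (g₂ ((a * |f' a| ^ s / (b * |f' b| ^ s)) ^ (q / 2))) ^ (1 / q)) := by
  have hb : 0 < b := ha.trans hab
  have hfa0 : 0 < |f' a| := one_pos.trans_le hfa
  set L := log b - log a with hLdef
  have hL : 0 < L := sub_pos.2 (log_lt_log ha hab)
  set c := b * |f' b| ^ s / (a * |f' a| ^ s) with hc
  have hc0 : 0 < c := by positivity
  set k := log c / L
  set φ : ℝ → ℝ := fun u => exp u * f' (exp u)
  have hφ : IntervalIntegrable φ volume (log a) (log b) :=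
    intervalIntegrable_exp_mul_comp_exp ha hb hf'
  have hbound (u) (hu : u ∈ Icc (log a) (log b)) :
      |φ u| ≤ a * |f' a| * exp (k * (u - log a)) :=
    abs_exp_mul_apply_exp_le ha hab hs0 hs1 hconv hfb0 hfb hfa hu
  have hmem (v) (hv : v ∈ Icc 0 (L / 2)) : log a + v ∈ Icc (log a) (log b) ∧
      log b - v ∈ Icc (log a) (log b) :=
    ⟨⟨by linarith [hv.1], by linarith [hv.2]⟩, ⟨by linarith [hv.2], by linarith [hv.1]⟩⟩
  have h₁ := integral_mul_abs_le_of_abs_le_mul_exp (by positivity) hq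
    (hφ.comp_add_left_half (log_le_log ha hab.le)) fun v hv => by
      simpa using hbound _ (hmem v hv).1
  have h₂ := integral_mul_abs_le_of_abs_le_mul_exp (K := a * |f' a| * c) (k := -k)
    (by positivity) hq (hφ.comp_sub_left_half (log_le_log ha hab.le)) fun v hv => by
      have hkL : k * (log b - v - log a) = log c + -k * v := by
        simp only [k]
        field_simp
        ring
      simpa only [hkL, exp_add, exp_log hc0, ← mul_assoc] using hbound _ (hmem v hv).2
  have hθ₃ : exp (q * k * (L / 2)) = c ^ (q / 2) := by
    rw [rpow_def_of_pos hc0]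
    congr 1
    simp only [k]
    field_simp
  have hθ₄ : exp (q * -k * (L / 2)) = (a * |f' a| ^ s / (b * |f' b| ^ s)) ^ (q / 2) := by
    rw [show a * |f' a| ^ s / (b * |f' b| ^ s) = c⁻¹ by rw [hc, inv_div],
      rpow_def_of_pos (inv_pos.2 hc0), log_inv]
    congr 1
    simp only [k]
    field_simp
  have hK : a * |f' a| * c = b * |f' b| ^ s * |f' a| ^ (1 - s) := by
    rw [hc, rpow_sub hfa0, rpow_one]
    field_simp
  rw [← hLdef, hθ₃] at h₁
  rw [← hLdef, hθ₄, hK] at h₂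
  have hid : L * f √(a * b) - ∫ x in a..b, f x / x =
      ∫ v in 0..L / 2, v * (φ (log a + v) - φ (log b - v)) :=
    log_sub_log_mul_apply_sqrt_sub_integral_div_eq ha hab.le hf hf'
  calc |f √(a * b) - 1 / L * ∫ x in a..b, f x / x|
      = 1 / L * |∫ v in 0..L / 2, v * (φ (log a + v) - φ (log b - v))| := by
        rw [← hid, show f √(a * b) - 1 / L * ∫ x in a..b, f x / x =
          1 / L * (L * f √(a * b) - ∫ x in a..b, f x / x) by field_simp, abs_mul,
          abs_of_pos (by positivity)]
    _ ≤ 1 / L * ((∫ v in 0..L / 2, v * |φ (log a + v)|) +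
          ∫ v in 0..L / 2, v * |φ (log b - v)|) :=
        mul_le_mul_of_nonneg_left (abs_integral_mul_sub_le (by positivity)
          (hφ.comp_add_left_half (log_le_log ha hab.le))
          (hφ.comp_sub_left_half (log_le_log ha hab.le))) (by positivity)
    _ ≤ _ := mul_le_mul_of_nonneg_left (add_le_add h₁ h₂) (by positivity)
    _ = _ := by
        rw [log_div hb.ne' ha.ne']
        field_simp
        ring

theorem stmt_17_general
    (I : Set ℝ) (hI : I.OrdConnected) (hIpos : I ⊆ Set.Ioi (0:ℝ))
    (f f' : ℝ → ℝ)
    (a b : ℝ) (ha : a ∈ interior I) (hb : b ∈ interior I) (hab : a < b)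
    (hdiff : ∀ x ∈ interior I, HasDerivAt f (f' x) x)
    (hint : IntervalIntegrable f' volume a b)
    (q s : ℝ) (hq : 1 < q) (hs : s ∈ Set.Ioc (0:ℝ) 1)
    (hconv : SGeometricallyConvexOn s (Set.Icc a b) (fun x => |f' x| ^ q))
    (hfb : |f' b| ≤ 1) (hfa : 1 ≤ |f' a|) :
    |f (Real.sqrt (a * b)) - (1 / (Real.log b - Real.log a)) * ∫ x in a..b, f x / x| ≤
      (1 / 4 : ℝ) * Real.log (b / a) * ((q - 1) / (2 * q - 1)) ^ (1 - 1 / q) *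
        (a * |f' a| * (g₂ ((b * |f' b| ^ s / (a * |f' a| ^ s)) ^ (q / 2))) ^ (1 / q)
         + b * |f' b| ^ s * |f' a| ^ (1 - s) * (g₂ ((a * |f' a| ^ s / (b * |f' b| ^ s)) ^ (q / 2))) ^ (1 / q)) := by
  have ha0 : 0 < a := hIpos (interior_subset ha)
  have hf : ∀ x ∈ Icc a b, HasDerivAt f (f' x) x := fun x hx =>
    hdiff x (hI.interior.out ha hb hx)
  have hconv' : SGeometricallyConvexOn s (Icc a b) (fun x => |f' x|) :=
    hconv.of_rpow (by linarith) fun x => abs_nonneg _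
  have hfb0 : 0 < |f' b| := by
    refine (abs_nonneg _).lt_of_ne' fun hfb0 => ?_
    have hzero : ∀ x ∈ Ioo a b, f' x = 0 := fun x hx =>
      abs_nonpos_iff.1 <|
        hconv'.nonpos_of_apply_right_eq_zero (g := fun x => |f' x|) ha0 hfb0 hx
    have hfa0 := eq_zero_of_hasDerivAt_of_forall_Ioo_eq_zero hab
      (fun x hx => hf x (Ico_subset_Icc_self hx)) hzero
    rw [hfa0, abs_zero] at hfa
    exact zero_lt_one.not_ge hfa
  exact abs_apply_sqrt_sub_integral_div_le ha0 hab hf hint hq hs.1.le hs.2 hconv' hfb0 hfb hfa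

theorem stmt_17
    (I : Set ℝ) (hI : I.OrdConnected) (hIpos : I ⊆ Set.Ioi (0:ℝ))
    (f f' : ℝ → ℝ) (hfpos : ∀ x ∈ I, 0 < f x)
    (a b : ℝ) (ha : a ∈ interior I) (hb : b ∈ interior I) (hab : a < b)
    (hdiff : ∀ x ∈ interior I, HasDerivAt f (f' x) x)
    (hint : IntervalIntegrable f' volume a b)
    (q s : ℝ) (hq : 1 < q) (hs : s ∈ Set.Ioc (0:ℝ) 1)
    (hconv : SGeometricallyConvexOn s (Set.Icc a b) (fun x => |f' x| ^ q))
    (hfb : |f' b| ≤ 1) (hfa : 1 ≤ |f' a|) :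
    |f (Real.sqrt (a * b)) - (1 / (Real.log b - Real.log a)) * ∫ x in a..b, f x / x| ≤
      (1 / 4 : ℝ) * Real.log (b / a) * ((q - 1) / (2 * q - 1)) ^ (1 - 1 / q) *
        (a * |f' a| * (g₂ ((b * |f' b| ^ s / (a * |f' a| ^ s)) ^ (q / 2))) ^ (1 / q)
         + b * |f' b| ^ s * |f' a| ^ (1 - s) * (g₂ ((a * |f' a| ^ s / (b * |f' b| ^ s)) ^ (q / 2))) ^ (1 / q)) :=
  stmt_17_general I hI hIpos f f' a b ha hb hab hdiff hint q s hq hs hconv hfb hfa
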